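/- arXiv:1504.05976 — 5 statements merged into one kernel-verified Lean document; each statement's English description precedes it below -/
import Mathlib

section
/- Suppose a sequence of monic polynomials Q_n of degree n is defined by the connection formula Q_n(x) = L̂_n^α(x) + Λ_n · L̂_{n-1}^α(x) for n ≥ 1 (with Q_0 = 1), where Λ_n are nonzero constants and L̂_n^α are monic Laguerre polynomials. If Q_n satisfies a three-term recurrence x·Q_n(x) = Q_{n+1}(x) + β̃_n Q_n(x) + γ̃_n Q_{n-1}(x), then necessarily β̃_n = β_n + Λ_n − Λ_{n+1} and γ̃_n = (Λ_n/Λ_{n-1})·γ_{n-1}, where β_n = 2n+α+1 and γ_n = n(n+α) are the Laguerre recurrence coefficients. -/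
open Finset

/-- Classical Laguerre polynomial `L_n^α(x)`. -/
noncomputable def laguerre (α : ℝ) (n : ℕ) (x : ℝ) : ℝ :=
  ∑ k ∈ Finset.range (n + 1),
    (-1 : ℝ) ^ k * (∏ j ∈ Finset.range (n - k), (α + k + 1 + j)) /
      ((n - k).factorial * k.factorial) * x ^ k

/-- Monic Laguerre polynomial `L̂_n^α(x) = (-1)^n n! L_n^α(x)`. -/
noncomputable def laguerreM (α : ℝ) (n : ℕ) (x : ℝ) : ℝ :=
  (-1 : ℝ) ^ n * n.factorial * laguerre α n x

/-- Laguerre recurrence coefficient `β_n = 2n + α + 1`. -/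
noncomputable def lagBeta (α : ℝ) (n : ℕ) : ℝ := 2 * n + α + 1

/-- Laguerre recurrence coefficient `γ_n = n(n + α)`. -/
noncomputable def lagGamma (α : ℝ) (n : ℕ) : ℝ := n * (n + α)

/-!
Expand everything in the basis of monic Laguerre polynomials `L̂_k`. By the Laguerre recurrence,
`x Q_n = x L̂_n + Λ_n x L̂_{n-1}` is an explicit combination of `L̂_{n+1}, …, L̂_{n-2}`, and so is
`Q_{n+1} + β̃_n Q_n + γ̃_n Q_{n-1}`. Since `L̂_k` is monic of degree `k`, these expansions are unique;
matching the `L̂_n`-coefficients gives `β̃_n`, and then the `L̂_{n-2}`-coefficients give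
`γ̃_n Λ_{n-1} = Λ_n γ_{n-1}`. The Laguerre recurrence itself is checked coefficientwise on the
explicit formula `L̂_n = ∑_k (-1)^(n-k) C(n,k) (α+k+1)_(n-k) x^k`.
-/

open Polynomial
open scoped Nat

section Pochhammer

variable {S : Type*} [CommSemiring S]

lemma ascPochhammer_eval_eq_prod_range (m : ℕ) (a : S) :
    (ascPochhammer S m).eval a = ∏ j ∈ range m, (a + j) := by
  induction m with
  | zero => simp
  | succ m ih => rw [ascPochhammer_succ_eval, ih, prod_range_succ]

lemma ascPochhammer_succ_eval_left (m : ℕ) (a : S) :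
    (ascPochhammer S (m + 1)).eval a = a * (ascPochhammer S m).eval (a + 1) := by
  simp [ascPochhammer_succ_left, eval_comp]

end Pochhammer

section Geronimus

variable {R : Type*} [CommRing R]

noncomputable def geronimusTransform (P : ℕ → R[X]) (Λ : ℕ → R) : ℕ → R[X]
  | 0 => P 0
  | n + 1 => P (n + 1) + C (Λ (n + 1)) * P n

variable {P : ℕ → R[X]} {β γ Λ : ℕ → R}

lemma geronimusTransform_succ (n : ℕ) :
    geronimusTransform P Λ (n + 1) = P (n + 1) + C (Λ (n + 1)) * P n := rfl

lemma natDegree_geronimusTransform_le (hdeg : ∀ n, (P n).natDegree = n) (n : ℕ) :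
    (geronimusTransform P Λ n).natDegree ≤ n := by
  cases n with
  | zero => exact (hdeg 0).le
  | succ n =>
    refine natDegree_add_le_of_degree_le (hdeg _).le ((natDegree_C_mul_le _ _).trans ?_)
    rw [hdeg]
    exact n.le_succ

theorem geronimusTransform_beta_eq (hmonic : ∀ n, (P n).Monic)
    (hdeg : ∀ n, (P n).natDegree = n)
    (hP : ∀ n, X * P n = P (n + 1) + C (β n) * P n + C (γ n) * P (n - 1)) {n : ℕ} {βt γt : R}
    (hrec : X * geronimusTransform P Λ (n + 1) = geronimusTransform P Λ (n + 2)
      + C βt * geronimusTransform P Λ (n + 1) + C γt * geronimusTransform P Λ n) :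
    βt = β (n + 1) + Λ (n + 1) - Λ (n + 2) := by
  have hlead : (P (n + 1)).coeff (n + 1) = 1 := by
    rw [← (hmonic (n + 1)).coeff_natDegree, hdeg]
  have hlow : ∀ k ≤ n, (P k).coeff (n + 1) = 0 := fun k hk ↦
    coeff_eq_zero_of_natDegree_lt (by rw [hdeg]; omega)
  have hG : (geronimusTransform P Λ n).coeff (n + 1) = 0 :=
    coeff_eq_zero_of_natDegree_lt ((natDegree_geronimusTransform_le hdeg n).trans_lt n.lt_succ_self)
  -- In degree `n + 1` only `P (n + 2)`, which occurs on both sides, and `P (n + 1)` contribute.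
  have h := congrArg (coeff · (n + 1)) hrec
  simp only [geronimusTransform_succ, mul_add, mul_left_comm X (C _), hP, Nat.add_sub_cancel] at h
  simp only [coeff_add, coeff_C_mul, hlead, hlow n le_rfl, hlow (n - 1) (n.sub_le 1), hG] at h
  linear_combination -h

theorem geronimusTransform_gamma_mul_eq (hmonic : ∀ n, (P n).Monic)
    (hdeg : ∀ n, (P n).natDegree = n)
    (hP : ∀ n, X * P n = P (n + 1) + C (β n) * P n + C (γ n) * P (n - 1)) {n : ℕ} {βt γt : R}
    (hrec : X * geronimusTransform P Λ (n + 2) = geronimusTransform P Λ (n + 3)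
      + C βt * geronimusTransform P Λ (n + 2) + C γt * geronimusTransform P Λ (n + 1)) :
    γt * Λ (n + 1) = Λ (n + 2) * γ (n + 1) := by
  have hβ : C βt = C (β (n + 2)) + C (Λ (n + 2)) - C (Λ (n + 3)) := by
    rw [geronimusTransform_beta_eq hmonic hdeg hP hrec, map_sub, map_add]
  set b := γ (n + 2) + Λ (n + 2) * β (n + 1) - βt * Λ (n + 2) - γt
  set c := Λ (n + 2) * γ (n + 1) - γt * Λ (n + 1)
  -- The `P (n + 3)` terms cancel outright, the `P (n + 2)` terms by `hβ`.
  have hcomb : C b * P (n + 1) + C c * P n = 0 := by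
    have h₂ := hP (n + 2)
    have h₁ := hP (n + 1)
    simp only [geronimusTransform_succ] at hrec
    simp only [Nat.add_sub_cancel, show n + 2 - 1 = n + 1 from rfl, b, c, map_add, map_sub,
      map_mul] at h₁ h₂ ⊢
    linear_combination hrec - h₂ - C (Λ (n + 2)) * h₁ + P (n + 2) * hβ
  have hlead : ∀ k, (P k).coeff k = 1 := fun k ↦ by rw [← (hmonic k).coeff_natDegree, hdeg]
  have htop := congrArg (coeff · (n + 1)) hcomb
  have hnext := congrArg (coeff · n) hcomb
  simp only [coeff_add, coeff_C_mul, hlead, coeff_zero,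
    coeff_eq_zero_of_natDegree_lt (p := P n) (n := n + 1) (by rw [hdeg]; omega)] at htop hnext
  have hb : b = 0 := by linear_combination htop
  rw [hb] at hnext
  linear_combination -hnext

end Geronimus

noncomputable def monicLaguerreCoeff (α : ℝ) (n k : ℕ) : ℝ :=
  (-1) ^ (n - k) * n.choose k * (ascPochhammer ℝ (n - k)).eval (α + k + 1)

noncomputable def monicLaguerre (α : ℝ) (n : ℕ) : ℝ[X] :=
  ∑ k ∈ range (n + 1), C (monicLaguerreCoeff α n k) * X ^ k

section MonicLaguerre

variable (α : ℝ)

lemma monicLaguerreCoeff_add_left (k m : ℕ) :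
    monicLaguerreCoeff α (k + m) k =
      (-1) ^ m * ((k + m)! / (k ! * m !)) * (ascPochhammer ℝ m).eval (α + k + 1) := by
  rw [monicLaguerreCoeff, Nat.add_sub_cancel_left, Nat.cast_add_choose]

lemma monicLaguerreCoeff_self (n : ℕ) : monicLaguerreCoeff α n n = 1 := by
  simp [monicLaguerreCoeff]

lemma monicLaguerreCoeff_of_lt {n k : ℕ} (h : n < k) : monicLaguerreCoeff α n k = 0 := by
  simp [monicLaguerreCoeff, Nat.choose_eq_zero_of_lt h]

lemma monicLaguerreCoeff_zero_right (n : ℕ) :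
    monicLaguerreCoeff α n 0 = (-1) ^ n * (ascPochhammer ℝ n).eval (α + 1) := by
  simp [monicLaguerreCoeff]

lemma monicLaguerreCoeff_recurrence_of_add_two (k i : ℕ) :
    monicLaguerreCoeff α (k + (i + 2)) k = monicLaguerreCoeff α (k + 1 + (i + 2)) (k + 1)
      + lagBeta α (k + (i + 2)) * monicLaguerreCoeff α (k + 1 + (i + 1)) (k + 1)
      + lagGamma α (k + (i + 2)) * monicLaguerreCoeff α (k + 1 + i) (k + 1) := by
  have hpoch : (ascPochhammer ℝ (i + 2)).eval (α + k + 1) =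
      (α + k + 1) * (ascPochhammer ℝ (i + 1)).eval (α + ↑(k + 1) + 1) := by
    rw [ascPochhammer_succ_eval_left]; push_cast; ring_nf
  rw [monicLaguerreCoeff_add_left, monicLaguerreCoeff_add_left, monicLaguerreCoeff_add_left,
    monicLaguerreCoeff_add_left, hpoch]
  simp only [ascPochhammer_succ_eval, lagBeta, lagGamma, show k + (i + 2) = k + i + 1 + 1 by ring,
    show k + 1 + (i + 2) = k + i + 1 + 1 + 1 by ring, show k + 1 + (i + 1) = k + i + 1 + 1 by ring,
    show k + 1 + i = k + i + 1 by ring, Nat.factorial_succ]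
  push_cast
  field_simp
  ring

lemma monicLaguerreCoeff_recurrence (n k : ℕ) :
    monicLaguerreCoeff α n k = monicLaguerreCoeff α (n + 1) (k + 1)
      + lagBeta α n * monicLaguerreCoeff α n (k + 1)
      + lagGamma α n * monicLaguerreCoeff α (n - 1) (k + 1) := by
  rcases lt_trichotomy n k with h | rfl | h
  · simp [monicLaguerreCoeff_of_lt α h, monicLaguerreCoeff_of_lt α (Nat.succ_lt_succ h),
      monicLaguerreCoeff_of_lt α (h.trans k.lt_succ_self),
      monicLaguerreCoeff_of_lt α ((n.sub_le 1).trans_lt (h.trans k.lt_succ_self))]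
  · simp [monicLaguerreCoeff_self, monicLaguerreCoeff_of_lt α n.lt_succ_self,
      monicLaguerreCoeff_of_lt α ((n.sub_le 1).trans_lt n.lt_succ_self)]
  obtain ⟨_ | i, rfl⟩ := Nat.exists_eq_add_of_lt h
  · simp only [add_zero, Nat.add_sub_cancel, monicLaguerreCoeff_self,
      monicLaguerreCoeff_of_lt α k.lt_succ_self, monicLaguerreCoeff_add_left, lagBeta, lagGamma,
      ascPochhammer_one, eval_X, Nat.factorial_succ]
    push_cast
    field_simp
    ring
  · have h := monicLaguerreCoeff_recurrence_of_add_two α k i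
    rwa [show k + 1 + (i + 2) = k + (i + 1) + 1 + 1 by ring,
      show k + 1 + (i + 1) = k + (i + 1) + 1 by ring, show k + 1 + i = k + (i + 1) + 1 - 1 by omega,
      show k + (i + 2) = k + (i + 1) + 1 by ring] at h

lemma monicLaguerreCoeff_recurrence_zero (n : ℕ) :
    monicLaguerreCoeff α (n + 1) 0 + lagBeta α n * monicLaguerreCoeff α n 0
      + lagGamma α n * monicLaguerreCoeff α (n - 1) 0 = 0 := by
  rcases n with _ | i
  · simp [monicLaguerreCoeff_zero_right, lagBeta, lagGamma]
  · simp only [monicLaguerreCoeff_zero_right, ascPochhammer_succ_eval, lagBeta, lagGamma,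
      Nat.add_sub_cancel, pow_succ]
    push_cast
    ring

lemma coeff_monicLaguerre (n k : ℕ) : (monicLaguerre α n).coeff k = monicLaguerreCoeff α n k := by
  simp only [monicLaguerre, finsetSum_coeff, coeff_C_mul_X_pow, sum_ite_eq, mem_range]
  split_ifs with h
  · rfl
  · exact (monicLaguerreCoeff_of_lt α (by omega)).symm

lemma natDegree_monicLaguerre_le (n : ℕ) : (monicLaguerre α n).natDegree ≤ n :=
  natDegree_le_iff_coeff_eq_zero.2 fun _ h ↦ by
    rw [coeff_monicLaguerre, monicLaguerreCoeff_of_lt α h]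

lemma monicLaguerre_monic (n : ℕ) : (monicLaguerre α n).Monic :=
  monic_of_natDegree_le_of_coeff_eq_one n (natDegree_monicLaguerre_le α n)
    (by rw [coeff_monicLaguerre, monicLaguerreCoeff_self])

lemma natDegree_monicLaguerre (n : ℕ) : (monicLaguerre α n).natDegree = n :=
  natDegree_eq_of_le_of_coeff_ne_zero (natDegree_monicLaguerre_le α n)
    (by simp [coeff_monicLaguerre, monicLaguerreCoeff_self])

lemma eval_monicLaguerre (n : ℕ) (x : ℝ) : (monicLaguerre α n).eval x = laguerreM α n x := by
  simp only [monicLaguerre, laguerreM, laguerre, eval_finsetSum, eval_mul, eval_C, eval_pow,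
    eval_X, mul_sum]
  refine sum_congr rfl fun k hk ↦ ?_
  obtain ⟨m, rfl⟩ := Nat.exists_eq_add_of_le (mem_range_succ_iff.1 hk)
  have hsign : ((-1 : ℝ) ^ k) ^ 2 = 1 := by rw [← pow_mul, pow_mul', neg_one_sq, one_pow]
  rw [monicLaguerreCoeff_add_left, Nat.add_sub_cancel_left, ascPochhammer_eval_eq_prod_range,
    pow_add]
  linear_combination
    (-(-1) ^ m * (k + m)! * (∏ j ∈ range m, (α + k + 1 + j)) * x ^ k / (m ! * k !)) * hsign

lemma X_mul_monicLaguerre (n : ℕ) :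
    X * monicLaguerre α n = monicLaguerre α (n + 1) + C (lagBeta α n) * monicLaguerre α n
      + C (lagGamma α n) * monicLaguerre α (n - 1) := by
  ext (_ | k)
  · simp only [coeff_X_mul_zero, coeff_add, coeff_C_mul, coeff_monicLaguerre]
    exact (monicLaguerreCoeff_recurrence_zero α n).symm
  · simp only [coeff_X_mul, coeff_add, coeff_C_mul, coeff_monicLaguerre]
    exact monicLaguerreCoeff_recurrence α n k

end MonicLaguerre

/-- If monic polynomials `Q_n = L̂_n^α + Λ_n L̂_{n-1}^α` satisfy a three-term
recurrence with coefficients `β̃_n`, `γ̃_n`, then necessarily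
`β̃_n = β_n + Λ_n − Λ_{n+1}` and `γ̃_n = (Λ_n/Λ_{n-1}) γ_{n-1}`. -/
theorem geronimus_recurrence_coefficients (α : ℝ) (Λ βt γt : ℕ → ℝ) (Q : ℕ → ℝ → ℝ)
    (hΛ : ∀ n, Λ n ≠ 0)
    (hQ0 : ∀ x, Q 0 x = 1)
    (hQ : ∀ n, 1 ≤ n → ∀ x, Q n x = laguerreM α n x + Λ n * laguerreM α (n - 1) x)
    (hrec : ∀ n, 1 ≤ n → ∀ x,
      x * Q n x = Q (n + 1) x + βt n * Q n x + γt n * Q (n - 1) x) :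
    (∀ n, 1 ≤ n → βt n = lagBeta α n + Λ n - Λ (n + 1)) ∧
    (∀ n, 2 ≤ n → γt n = Λ n / Λ (n - 1) * lagGamma α (n - 1)) := by
  set G := geronimusTransform (monicLaguerre α) Λ
  have hQG : ∀ n x, Q n x = (G n).eval x := by
    rintro (_ | n) x
    · simp [G, geronimusTransform, hQ0, eval_monicLaguerre, laguerreM, laguerre]
    · simp [G, geronimusTransform_succ, hQ (n + 1) n.succ_pos, eval_monicLaguerre]
  have hrecG : ∀ n, 1 ≤ n → X * G n = G (n + 1) + C (βt n) * G n + C (γt n) * G (n - 1) :=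
    fun n hn ↦ Polynomial.funext fun x ↦ by simpa [hQG] using hrec n hn x
  have hL := monicLaguerre_monic α
  have hdeg := natDegree_monicLaguerre α
  have hX := X_mul_monicLaguerre α
  refine ⟨fun n hn ↦ ?_, fun n hn ↦ ?_⟩
  · obtain ⟨n, rfl⟩ := Nat.exists_eq_add_of_le' hn
    rw [geronimusTransform_beta_eq hL hdeg hX (hrecG _ hn), lagBeta]
  · obtain ⟨n, rfl⟩ := Nat.exists_eq_add_of_le' hn
    have h := geronimusTransform_gamma_mul_eq hL hdeg hX (hrecG (n + 2) (by omega))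
    rw [show n + 2 - 1 = n + 1 from rfl, div_mul_eq_mul_div, eq_div_iff (hΛ _)]
    exact h
end

section
/- For α > −1 and z ∈ ℂ with z ∉ [0,∞), the Laguerre function of the second kind F̂_n^α(z) = ∫₀^∞ L̂_n^α(t) t^α e^{−t}/(t−z) dt satisfies F̂_n^α(z) = (−1)^n n! Γ(n+α+1) U(n+1, 1−α, z e^{±πi}), with plus sign if −π < arg z ≤ 0 and minus sign if 0 < arg z ≤ π, where U is the confluent hypergeometric function of the second kind. -/
open Finset

/-- Kummer confluent hypergeometric function of the second kind `U(a,b,·)`: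
the analytic function on the slit plane `|arg w| < π` agreeing, for `Re w > 0`,
with the integral `(1/Γ(a)) ∫₀^∞ e^{−wt} t^{a−1}(1+t)^{b−a−1} dt`. -/
noncomputable def KummerU (a b : ℂ) : ℂ → ℂ :=
  Classical.epsilon fun U : ℂ → ℂ =>
    (∀ w : ℂ, 0 < w.re →
      U w = (Complex.Gamma a)⁻¹ * ∫ t in Set.Ioi (0 : ℝ),
        Complex.exp (-w * t) * (t : ℂ) ^ (a - 1) * (1 + (t : ℂ)) ^ (b - a - 1)) ∧
    AnalyticOnNhd ℂ U Complex.slitPlane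

/-- Laguerre function of the second kind
`F̂_n^α(z) = ∫₀^∞ L̂_n^α(t) t^α e^{−t}/(t−z) dt`. -/
noncomputable def Fhat (α : ℝ) (n : ℕ) (z : ℂ) : ℂ :=
  ∫ t in Set.Ioi (0 : ℝ),
    (laguerreM α n t : ℂ) * (t : ℂ) ^ (α : ℂ) * Complex.exp (-(t : ℂ)) / ((t : ℂ) - z)

/-! For `Re w > 0` write `1 / (t + w) = ∫₀^∞ e^{-(t+w)s} ds` and swap the integrals: the inner
integral is the Laplace transform of `L̂_n^α(t) t^α e^{-t}` at `1 + s`, which equals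
`(-1)^n Γ(n+α+1) s^n (1+s)^{-(n+α+1)}`, so `F̂_n^α(-w)` is a multiple of the integral defining
`U(n+1, 1-α, w)`. Both sides are analytic on the slit plane, so they agree there by the identity
theorem, and `z e^{±πi} = -z` lies in the slit plane when `z ∉ [0, ∞)`. -/

open MeasureTheory Set Filter Complex

lemma laguerreM_eq_sum (α : ℝ) (n : ℕ) (t : ℝ) :
    laguerreM α n t = ∑ k ∈ Finset.range (n + 1),
      (-1) ^ (n + k) * n.choose k * (∏ j ∈ Finset.range (n - k), (α + k + 1 + j)) * t ^ k := by
  unfold laguerreM laguerre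
  rw [Finset.mul_sum]
  refine Finset.sum_congr rfl fun k hk => ?_
  have hkn : k ≤ n := Nat.lt_succ_iff.mp (Finset.mem_range.mp hk)
  rw [Nat.choose_eq_factorial_div_factorial hkn,
    Nat.cast_div (Nat.factorial_mul_factorial_dvd_factorial hkn) (by positivity)]
  push_cast
  field_simp
  ring

theorem Real.prod_range_add_mul_Gamma {x : ℝ} (hx : 0 < x) (m : ℕ) :
    (∏ j ∈ Finset.range m, (x + j)) * Real.Gamma x = Real.Gamma (x + m) := by
  induction m with
  | zero => simp
  | succ m ih =>
    rw [Finset.prod_range_succ, mul_right_comm, ih, Nat.cast_succ, ← add_assoc,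
      Real.Gamma_add_one (by positivity), mul_comm]

theorem integral_pow_mul_rpow_mul_exp_neg_mul {α p : ℝ} (hα : -1 < α) (hp : 0 < p) (k : ℕ) :
    ∫ t in Ioi (0 : ℝ), t ^ k * t ^ α * Real.exp (-(p * t)) =
      Real.Gamma (α + k + 1) / p ^ (α + k + 1) := by
  have hαk : 0 < α + k + 1 := by linarith [(Nat.cast_nonneg k : (0:ℝ) ≤ k)]
  rw [div_eq_inv_mul, ← Real.inv_rpow hp.le, ← one_div,
    ← Real.integral_rpow_mul_exp_neg_mul_Ioi hαk hp]
  refine setIntegral_congr_fun measurableSet_Ioi fun t (ht : 0 < t) => ?_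
  rw [add_sub_cancel_right, Real.rpow_add ht, Real.rpow_natCast, mul_comm (t ^ α)]

theorem integrableOn_pow_mul_rpow_mul_exp_neg_mul {α p : ℝ} (hα : -1 < α) (hp : 0 < p)
    (k : ℕ) : IntegrableOn (fun t : ℝ => t ^ k * t ^ α * Real.exp (-(p * t))) (Ioi 0) := by
  have hαk : -1 < α + k := by linarith [(Nat.cast_nonneg k : (0:ℝ) ≤ k)]
  refine (integrableOn_rpow_mul_exp_neg_mul_rpow hαk one_pos hp).congr_fun
    (fun t (ht : 0 < t) => ?_) measurableSet_Ioi
  simp only [Real.rpow_one, Real.rpow_add ht, Real.rpow_natCast, neg_mul]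
  ring

lemma laguerreM_mul_rpow_mul_exp_eq_sum (α p : ℝ) (n : ℕ) (t : ℝ) :
    laguerreM α n t * t ^ α * Real.exp (-(p * t)) = ∑ k ∈ Finset.range (n + 1),
      (-1) ^ (n + k) * n.choose k * (∏ j ∈ Finset.range (n - k), (α + k + 1 + j)) *
        (t ^ k * t ^ α * Real.exp (-(p * t))) := by
  rw [laguerreM_eq_sum, Finset.sum_mul, Finset.sum_mul]
  exact Finset.sum_congr rfl fun k _ => by ring

theorem integrableOn_laguerreM_mul_rpow_mul_exp_neg_mul {α p : ℝ} (hα : -1 < α) (hp : 0 < p)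
    (n : ℕ) :
    IntegrableOn (fun t => laguerreM α n t * t ^ α * Real.exp (-(p * t))) (Ioi 0) := by
  simp_rw [laguerreM_mul_rpow_mul_exp_eq_sum]
  exact integrable_finsetSum _ fun k _ =>
    (integrableOn_pow_mul_rpow_mul_exp_neg_mul hα hp k).const_mul _

theorem integral_laguerreM_mul_rpow_mul_exp_neg_mul {α p : ℝ} (hα : -1 < α) (hp : 0 < p)
    (n : ℕ) : ∫ t in Ioi (0 : ℝ), laguerreM α n t * t ^ α * Real.exp (-(p * t)) =
      (-1) ^ n * Real.Gamma (α + n + 1) * (p - 1) ^ n / p ^ (α + n + 1) := by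
  simp_rw [laguerreM_mul_rpow_mul_exp_eq_sum]
  rw [integral_finsetSum _ fun k _ =>
    (integrableOn_pow_mul_rpow_mul_exp_neg_mul hα hp k).const_mul _]
  simp_rw [integral_const_mul, integral_pow_mul_rpow_mul_exp_neg_mul hα hp]
  rw [sub_eq_neg_add, add_pow, Finset.mul_sum, Finset.sum_div]
  refine Finset.sum_congr rfl fun k hk => ?_
  have hkn : k ≤ n := Nat.lt_succ_iff.mp (Finset.mem_range.mp hk)
  have hΓ : (∏ j ∈ Finset.range (n - k), (α + k + 1 + j)) * Real.Gamma (α + k + 1) =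
      Real.Gamma (α + n + 1) := by
    rw [Real.prod_range_add_mul_Gamma (by linarith [(Nat.cast_nonneg k : (0:ℝ) ≤ k)]),
      Nat.cast_sub hkn]
    ring_nf
  have hpow : p ^ (α + n + 1) = p ^ (α + k + 1) * p ^ (n - k) := by
    rw [← Real.rpow_natCast, ← Real.rpow_add hp, Nat.cast_sub hkn]
    ring_nf
  rw [← hΓ, hpow, pow_add]
  field_simp

namespace Complex

theorem exists_pos_le_norm_ofReal_add {w : ℂ} (hw : w ∈ slitPlane) :
    ∃ δ > 0, ∀ t : ℝ, 0 ≤ t → δ ≤ ‖(t : ℂ) + w‖ := by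
  rcases hw with hre | him
  · refine ⟨w.re, hre, fun t ht => (?_ : w.re ≤ _).trans (re_le_norm _)⟩
    simp only [add_re, ofReal_re]
    linarith
  · refine ⟨|w.im|, abs_pos.mpr him, fun t _ => ?_⟩
    simpa using abs_im_le_norm ((t : ℂ) + w)

theorem integral_exp_neg_mul_Ioi {c : ℂ} (hc : 0 < c.re) :
    ∫ s in Ioi (0 : ℝ), exp (-c * s) = c⁻¹ := by
  simpa [div_neg, neg_div, ← div_eq_inv_mul] using
    integral_exp_mul_complex_Ioi (a := -c) (by simpa using hc) 0

end Complex

noncomputable def stieltjesTransform (f : ℝ → ℂ) (w : ℂ) : ℂ :=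
  ∫ t in Ioi (0 : ℝ), f t / (t + w)

section StieltjesTransform

variable {f : ℝ → ℂ}

theorem integrableOn_div_ofReal_add (hf : IntegrableOn f (Ioi 0)) {w : ℂ} (hw : w ∈ slitPlane) :
    IntegrableOn (fun t : ℝ => f t / (t + w)) (Ioi 0) := by
  obtain ⟨δ, hδ, hδw⟩ := exists_pos_le_norm_ofReal_add hw
  simp_rw [div_eq_inv_mul]
  refine hf.bdd_mul (c := δ⁻¹) (by fun_prop) ?_
  filter_upwards [ae_restrict_mem measurableSet_Ioi] with t (ht : 0 < t)
  rw [norm_inv]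
  exact inv_anti₀ hδ (hδw t ht.le)

theorem differentiableOn_stieltjesTransform (hf : IntegrableOn f (Ioi 0)) :
    DifferentiableOn ℂ (stieltjesTransform f) slitPlane := by
  intro w₀ hw₀
  obtain ⟨δ, hδ, hδw₀⟩ := exists_pos_le_norm_ofReal_add hw₀
  have hball : ∀ w ∈ Metric.ball w₀ (δ / 2), ∀ t : ℝ, 0 ≤ t → δ / 2 ≤ ‖(t : ℂ) + w‖ := by
    intro w hw t ht
    have := norm_sub_norm_le ((t : ℂ) + w₀) ((t : ℂ) + w)
    rw [add_sub_add_left_eq_sub, ← dist_eq, dist_comm] at this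
    linarith [hδw₀ t ht, Metric.mem_ball.mp hw]
  have hfm := hf.aestronglyMeasurable
  have hderiv := hasDerivAt_integral_of_dominated_loc_of_deriv_le
    (F' := fun w t => -(f t / ((t : ℂ) + w) ^ 2)) (bound := fun t => (δ / 2)⁻¹ ^ 2 * ‖f t‖)
    (Metric.ball_mem_nhds w₀ (half_pos hδ))
    ((isOpen_slitPlane.eventually_mem hw₀).mono fun w hw =>
      (integrableOn_div_ofReal_add hf hw).aestronglyMeasurable)
    (integrableOn_div_ofReal_add hf hw₀) (by simp_rw [div_eq_mul_inv]; fun_prop) ?_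
    (hf.norm.const_mul _) ?_
  · exact hderiv.2.differentiableAt.differentiableWithinAt
  · filter_upwards [ae_restrict_mem measurableSet_Ioi] with t (ht : 0 < t) w hw
    rw [norm_neg, norm_div, norm_pow, div_eq_inv_mul, ← inv_pow]
    gcongr
    exact hball w hw t ht.le
  · filter_upwards [ae_restrict_mem measurableSet_Ioi] with t (ht : 0 < t) w hw
    have hne : (t : ℂ) + w ≠ 0 := norm_pos_iff.mp ((half_pos hδ).trans_le (hball w hw t ht.le))
    simpa [div_eq_mul_inv, neg_div] using
      (((hasDerivAt_id w).const_add (t : ℂ)).inv hne).const_mul (f t)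

theorem stieltjesTransform_eq_integral_exp_mul (hf : IntegrableOn f (Ioi 0)) {w : ℂ}
    (hw : 0 < w.re) :
    stieltjesTransform f w =
      ∫ s in Ioi (0 : ℝ), exp (-w * s) * ∫ t in Ioi (0 : ℝ), f t * exp (-t * s) := by
  set F : ℝ → ℝ → ℂ := fun t s => f t * exp (-(t + w) * s)
  have hpos : ∀ t : ℝ, 0 < t → 0 < ((t : ℂ) + w).re := fun t ht => by simp; linarith
  have hfm := hf.aestronglyMeasurable.comp_fst (ν := volume.restrict (Ioi (0 : ℝ)))
  have hF : Integrable (Function.uncurry F)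
      ((volume.restrict (Ioi 0)).prod (volume.restrict (Ioi 0))) := by
    refine Integrable.mono' (hf.norm.mul_prod (integrableOn_exp_mul_complex_Ioi
      (a := -w) (by simpa using hw) 0).norm) (hfm.mul (by fun_prop)) ?_
    rw [Measure.prod_restrict]
    filter_upwards [ae_restrict_mem (measurableSet_Ioi.prod measurableSet_Ioi)]
      with ⟨t, s⟩ ⟨(ht : 0 < t), (hs : 0 < s)⟩
    simp only [Function.uncurry, F, norm_mul, norm_exp]
    refine mul_le_mul_of_nonneg_left (Real.exp_le_exp.mpr ?_) (norm_nonneg _)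
    simp only [neg_mul, neg_re, mul_re, add_re, ofReal_re, ofReal_im, mul_zero, sub_zero]
    nlinarith
  calc stieltjesTransform f w
      = ∫ t in Ioi (0 : ℝ), ∫ s in Ioi (0 : ℝ), F t s := by
        refine setIntegral_congr_fun measurableSet_Ioi fun t (ht : 0 < t) => ?_
        rw [integral_const_mul, integral_exp_neg_mul_Ioi (hpos t ht), div_eq_mul_inv]
    _ = ∫ s in Ioi (0 : ℝ), ∫ t in Ioi (0 : ℝ), F t s := integral_integral_swap hF
    _ = _ := by
        refine integral_congr_ae (Eventually.of_forall fun s => ?_)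
        simp only [F, ← integral_const_mul]
        congr 1 with t
        rw [neg_add, add_mul, exp_add]
        ring

end StieltjesTransform

theorem eqOn_KummerU {a b : ℂ} {U : ℂ → ℂ}
    (hU : ∀ w : ℂ, 0 < w.re → U w = (Gamma a)⁻¹ * ∫ t in Ioi (0 : ℝ),
      exp (-w * t) * (t : ℂ) ^ (a - 1) * (1 + (t : ℂ)) ^ (b - a - 1))
    (hUan : AnalyticOnNhd ℂ U slitPlane) : EqOn (KummerU a b) U slitPlane := by
  obtain ⟨hK, hKan⟩ := Classical.epsilon_spec (p := fun U : ℂ → ℂ =>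
    (∀ w : ℂ, 0 < w.re → U w = (Gamma a)⁻¹ * ∫ t in Ioi (0 : ℝ),
      exp (-w * t) * (t : ℂ) ^ (a - 1) * (1 + (t : ℂ)) ^ (b - a - 1)) ∧
    AnalyticOnNhd ℂ U slitPlane) ⟨U, hU, hUan⟩
  refine hKan.eqOn_of_preconnected_of_eventuallyEq hUan
    ((starConvex_one_slitPlane).isPathConnected one_mem_slitPlane).isConnected.isPreconnected
    one_mem_slitPlane ?_
  filter_upwards [(isOpen_lt continuous_const continuous_re).mem_nhds
    (show (0 : ℝ) < (1 : ℂ).re by simp)] with w (hw : 0 < w.re)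
  exact (hK w hw).trans (hU w hw).symm

noncomputable def weightedLaguerre (α : ℝ) (n : ℕ) (t : ℝ) : ℂ :=
  (laguerreM α n t : ℂ) * (t : ℂ) ^ (α : ℂ) * exp (-(t : ℂ))

theorem Fhat_eq_stieltjesTransform (α : ℝ) (n : ℕ) (z : ℂ) :
    Fhat α n z = stieltjesTransform (weightedLaguerre α n) (-z) := by
  simp only [Fhat, stieltjesTransform, weightedLaguerre, sub_eq_add_neg]

theorem weightedLaguerre_eq_ofReal (α : ℝ) (n : ℕ) {t : ℝ} (ht : 0 ≤ t) :
    weightedLaguerre α n t = ((laguerreM α n t * t ^ α * Real.exp (-t) : ℝ) : ℂ) := by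
  push_cast [weightedLaguerre, ofReal_cpow ht]
  rfl

theorem integrableOn_weightedLaguerre {α : ℝ} (hα : -1 < α) (n : ℕ) :
    IntegrableOn (weightedLaguerre α n) (Ioi 0) := by
  have h := integrableOn_laguerreM_mul_rpow_mul_exp_neg_mul hα one_pos n
  simp only [one_mul] at h
  exact IntegrableOn.congr_fun h.ofReal
    (fun t (ht : 0 < t) => (weightedLaguerre_eq_ofReal α n ht.le).symm) measurableSet_Ioi

theorem integral_weightedLaguerre_mul_exp {α s : ℝ} (hα : -1 < α) (hs : -1 < s) (n : ℕ) :
    ∫ t in Ioi (0 : ℝ), weightedLaguerre α n t * exp (-t * s) =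
      ((-1) ^ n * Real.Gamma (α + n + 1) * s ^ n / (1 + s) ^ (α + n + 1) : ℝ) := by
  have h := integral_laguerreM_mul_rpow_mul_exp_neg_mul hα (by linarith : 0 < 1 + s) n
  rw [add_sub_cancel_left] at h
  rw [← h, ← integral_complex_ofReal]
  refine setIntegral_congr_fun measurableSet_Ioi fun t (ht : 0 < t) => ?_
  rw [weightedLaguerre_eq_ofReal α n ht.le]
  push_cast
  rw [mul_assoc, ← exp_add]
  ring_nf

theorem stieltjesTransform_weightedLaguerre {α : ℝ} (hα : -1 < α) (n : ℕ) {w : ℂ}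
    (hw : 0 < w.re) :
    stieltjesTransform (weightedLaguerre α n) w =
      (-1 : ℂ) ^ n * n.factorial * Gamma ((n : ℂ) + α + 1) *
        ((Gamma ((n : ℂ) + 1))⁻¹ * ∫ s in Ioi (0 : ℝ),
          exp (-w * s) * (s : ℂ) ^ ((n : ℂ) + 1 - 1) *
            (1 + (s : ℂ)) ^ (1 - (α : ℂ) - ((n : ℂ) + 1) - 1)) := by
  have hΓ : Gamma ((n : ℂ) + α + 1) = (Real.Gamma (α + n + 1) : ℂ) := by
    rw [← Gamma_ofReal]
    push_cast
    ring_nf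
  rw [stieltjesTransform_eq_integral_exp_mul (integrableOn_weightedLaguerre hα n) hw,
    Gamma_nat_eq_factorial, hΓ, ← mul_assoc, mul_right_comm ((-1 : ℂ) ^ n),
    mul_inv_cancel_right₀ (Nat.cast_ne_zero.mpr n.factorial_ne_zero),
    ← integral_const_mul]
  refine setIntegral_congr_fun measurableSet_Ioi fun s (hs : 0 < s) => ?_
  have hs1 : (0 : ℝ) < 1 + s := by linarith
  have hpow : (1 + (s : ℂ)) ^ (1 - (α : ℂ) - ((n : ℂ) + 1) - 1) =
      (((1 + s) ^ (α + n + 1) : ℝ) : ℂ)⁻¹ := by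
    rw [← ofReal_inv, ← Real.rpow_neg hs1.le, ofReal_cpow hs1.le]
    push_cast
    ring_nf
  rw [integral_weightedLaguerre_mul_exp hα (by linarith) n, hpow, add_sub_cancel_right,
    cpow_natCast]
  push_cast
  ring

/-- `F̂_n^α(z) = (−1)^n n! Γ(n+α+1) U(n+1, 1−α, z e^{±πi})`, with plus sign if
`−π < arg z ≤ 0` and minus sign if `0 < arg z ≤ π`. -/
theorem Fhat_eq_KummerU (α : ℝ) (hα : -1 < α) (n : ℕ) (z : ℂ)
    (hz : ¬(z.im = 0 ∧ 0 ≤ z.re)) :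
    Fhat α n z =
      (-1 : ℂ) ^ n * n.factorial * Complex.Gamma ((n : ℂ) + α + 1) *
        KummerU ((n : ℂ) + 1) (1 - (α : ℂ))
          (if z.arg ≤ 0 then z * Complex.exp ((Real.pi : ℂ) * Complex.I)
           else z * Complex.exp (-(Real.pi : ℂ) * Complex.I)) := by
  set c : ℂ := (-1 : ℂ) ^ n * n.factorial * Gamma ((n : ℂ) + α + 1)
  have hc : c ≠ 0 := mul_ne_zero (by simp [n.factorial_ne_zero])
    (Gamma_ne_zero_of_re_pos (by simp; linarith [(Nat.cast_nonneg n : (0 : ℝ) ≤ n)]))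
  have hK : EqOn (KummerU ((n : ℂ) + 1) (1 - (α : ℂ)))
      (fun w => c⁻¹ * stieltjesTransform (weightedLaguerre α n) w) slitPlane :=
    eqOn_KummerU (fun w hw => by rw [stieltjesTransform_weightedLaguerre hα n hw,
      inv_mul_cancel_left₀ hc])
      (analyticOnNhd_const.mul ((differentiableOn_stieltjesTransform
        (integrableOn_weightedLaguerre hα n)).analyticOnNhd isOpen_slitPlane))
  have hbranch : (if z.arg ≤ 0 then z * exp (Real.pi * I) else z * exp (-Real.pi * I)) = -z := by
    split_ifs <;> simp [exp_pi_mul_I, neg_mul, exp_neg_pi_mul_I]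
  have hmz : -z ∈ slitPlane := by
    rw [mem_slitPlane_iff, neg_re, neg_im, neg_pos, neg_ne_zero]
    by_contra! h
    exact hz ⟨h.2, h.1⟩
  rw [hbranch, Fhat_eq_stieltjesTransform, hK hmz, mul_inv_cancel_left₀ hc]
end

section
/- For Re a > 0 and Re z > 0, the substitution t/(1+t) = e^{−τ} transforms the integral representation U(a,b,z) = (1/Γ(a))∫₀^∞ e^{−zt} t^{a−1}(1+t)^{b−a−1} dt into U(a,b,z) = (e^{z/2}/Γ(a)) ∫₀^∞ e^{−aτ − z/τ} τ^{−b} f(τ) dτ, where f(τ) = e^{zμ(τ)} (τ/(1−e^{−τ}))^b and μ(τ) = 1/τ − 1/(e^τ−1) − 1/2. -/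
lemma cpow_ofReal_pos {x : ℝ} (hx : 0 < x) (c : ℂ) :
    (x : ℂ) ^ c = Complex.exp (c * Real.log x) := by
  rw [Complex.cpow_def_of_ne_zero (by exact_mod_cast hx.ne') c,
    ← Complex.ofReal_log hx.le, mul_comm]

lemma ofReal_pos_eq_exp_log {x : ℝ} (hx : 0 < x) :
    (x : ℂ) = Complex.exp (Real.log x) := by
  rw [← Complex.ofReal_exp, Real.exp_log hx]

/-- The substitution `t/(1+t) = e^{−τ}` transforms the integral representation of
the Kummer `U` function: for `Re a > 0`, `Re z > 0`,
`(1/Γ(a)) ∫₀^∞ e^{−zt} t^{a−1}(1+t)^{b−a−1} dt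
  = (e^{z/2}/Γ(a)) ∫₀^∞ e^{−aτ−z/τ} τ^{−b} f(τ) dτ`,
where `f(τ) = e^{zμ(τ)} (τ/(1−e^{−τ}))^b` and `μ(τ) = 1/τ − 1/(e^τ−1) − 1/2`. -/
theorem kummerU_integral_substitution (a b z : ℂ) (ha : 0 < a.re) (hz : 0 < z.re) :
    (Complex.Gamma a)⁻¹ * ∫ t in Set.Ioi (0 : ℝ),
        Complex.exp (-z * t) * (t : ℂ) ^ (a - 1) * (1 + (t : ℂ)) ^ (b - a - 1) =
      Complex.exp (z / 2) / Complex.Gamma a * ∫ τ in Set.Ioi (0 : ℝ),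
        Complex.exp (-a * τ - z / τ) * (τ : ℂ) ^ (-b) *
          (Complex.exp (z * (1 / (τ : ℂ) - 1 / (Complex.exp τ - 1) - 1 / 2)) *
            ((τ : ℂ) / (1 - Complex.exp (-(τ : ℂ)))) ^ b) := by
  set f : ℝ → ℝ := fun τ => (Real.exp τ - 1)⁻¹ with hf
  set f' : ℝ → ℝ := fun τ => -Real.exp τ / (Real.exp τ - 1) ^ 2 with hf'
  set g : ℝ → ℂ := fun t =>
    Complex.exp (-z * t) * (t : ℂ) ^ (a - 1) * (1 + (t : ℂ)) ^ (b - a - 1) with hg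
  have hsub : ∀ x ∈ Set.Ioi (0 : ℝ), (0 : ℝ) < Real.exp x - 1 := fun x hx => by
    nlinarith [Real.add_one_le_exp x, Set.mem_Ioi.mp hx]
  have hderiv : ∀ x ∈ Set.Ioi (0 : ℝ), HasDerivWithinAt f (f' x) (Set.Ioi 0) x := by
    intro x hx
    exact (((Real.hasDerivAt_exp x).sub_const 1).inv (hsub x hx).ne').hasDerivWithinAt
  have hinj : Set.InjOn f (Set.Ioi 0) := by
    intro x hx y hy hxy
    have : Real.exp x - 1 = Real.exp y - 1 := inv_injective hxy
    exact Real.exp_injective (by linarith)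
  have himg : f '' Set.Ioi 0 = Set.Ioi (0 : ℝ) := by
    ext t
    constructor
    · rintro ⟨τ, hτ, rfl⟩
      exact Set.mem_Ioi.mpr (inv_pos.mpr (hsub τ hτ))
    · intro ht
      have ht' : (0 : ℝ) < t := ht
      refine ⟨Real.log (1 + t⁻¹), ?_, ?_⟩
      · have h1 : (1 : ℝ) < 1 + t⁻¹ := by
          have := inv_pos.mpr ht'; linarith
        exact Set.mem_Ioi.mpr (Real.log_pos h1)
      · have h0 : (0 : ℝ) < 1 + t⁻¹ := by
          have := inv_pos.mpr ht'; linarith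
        simp only [hf, Real.exp_log h0]
        field_simp
        ring
  have key : (∫ t in Set.Ioi (0 : ℝ), g t) =
      Complex.exp (z / 2) * ∫ τ in Set.Ioi (0 : ℝ),
        Complex.exp (-a * τ - z / τ) * (τ : ℂ) ^ (-b) *
          (Complex.exp (z * (1 / (τ : ℂ) - 1 / (Complex.exp τ - 1) - 1 / 2)) *
            ((τ : ℂ) / (1 - Complex.exp (-(τ : ℂ)))) ^ b) := by
    have h2 := MeasureTheory.integral_image_eq_integral_abs_deriv_smul
      measurableSet_Ioi hderiv hinj g
    rw [himg] at h2
    rw [h2, ← MeasureTheory.integral_const_mul]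
    apply MeasureTheory.setIntegral_congr_fun measurableSet_Ioi
    intro τ hτ
    have hτ0 : (0 : ℝ) < τ := hτ
    have hx : (0 : ℝ) < Real.exp τ - 1 := hsub τ hτ
    set x : ℝ := Real.exp τ - 1 with hxdef
    have hE : (0 : ℝ) < Real.exp τ := Real.exp_pos τ
    have h1e : (0 : ℝ) < 1 - Real.exp (-τ) := by
      have := Real.exp_lt_one_iff.mpr (neg_lt_zero.mpr hτ0)
      linarith
    have hcexp : Complex.exp (τ : ℂ) - 1 = ((x : ℝ) : ℂ) := by
      rw [← Complex.ofReal_exp]; push_cast [hxdef]; ring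
    have hcexp2 : 1 - Complex.exp (-(τ : ℂ)) = ((1 - Real.exp (-τ) : ℝ) : ℂ) := by
      rw [← Complex.ofReal_neg, ← Complex.ofReal_exp]; push_cast; ring
    have h1tR : 1 + x⁻¹ = Real.exp τ / x := by
      rw [hxdef, eq_div_iff (hsub τ hτ).ne', add_mul, inv_mul_cancel₀ (hsub τ hτ).ne']; ring
    have h1t : 1 + ((x⁻¹ : ℝ) : ℂ) = ((Real.exp τ / x : ℝ) : ℂ) := by
      rw [← h1tR, Complex.ofReal_add, Complex.ofReal_one]
    have hdiv : ((τ : ℂ)) / ((1 - Real.exp (-τ) : ℝ) : ℂ)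
        = ((τ / (1 - Real.exp (-τ)) : ℝ) : ℂ) := (Complex.ofReal_div _ _).symm
    simp only [hg, hf, hf']
    rw [← hxdef, Complex.real_smul, hcexp, hcexp2, h1t, hdiv,
      abs_div, abs_neg, abs_of_pos hE, abs_of_pos (pow_pos hx 2),
      cpow_ofReal_pos (inv_pos.mpr hx), cpow_ofReal_pos (div_pos hE hx),
      cpow_ofReal_pos hτ0, cpow_ofReal_pos (div_pos hτ0 h1e),
      ofReal_pos_eq_exp_log (div_pos hE (pow_pos hx 2))]
    have hlog1 : Real.log (Real.exp τ / x ^ 2) = τ - 2 * Real.log x := by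
      rw [Real.log_div (by positivity) (by positivity), Real.log_exp, Real.log_pow]
      push_cast; ring
    have hlog2 : Real.log x⁻¹ = -Real.log x := Real.log_inv x
    have hlog3 : Real.log (Real.exp τ / x) = τ - Real.log x := by
      rw [Real.log_div (by positivity) hx.ne', Real.log_exp]
    have hlog4 : Real.log (τ / (1 - Real.exp (-τ))) = Real.log τ - (Real.log x - τ) := by
      have hxe : 1 - Real.exp (-τ) = x / Real.exp τ := by
        rw [hxdef, Real.exp_neg]; field_simp
      rw [Real.log_div hτ0.ne' h1e.ne', hxe, Real.log_div hx.ne' hE.ne', Real.log_exp]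
    rw [hlog1, hlog2, hlog3, hlog4]
    simp only [← Complex.exp_add]
    congr 1
    have hτc : (τ : ℂ) ≠ 0 := by exact_mod_cast hτ0.ne'
    have hxc : ((x : ℝ) : ℂ) ≠ 0 := by exact_mod_cast hx.ne'
    push_cast
    ring
  rw [hg] at key
  rw [key]
  ring
end

section
/- Let μ(τ) = 1/τ − 1/(e^τ−1) − 1/2 and b = 1−α. The Taylor coefficients d_m(α,z) of f(τ) = e^{zμ(τ)}(τ/(1−e^{−τ}))^b around τ = 0 satisfy d_0(α,z) = 1, d_1(α,z) = (6(1−α) − z)/12, and d_2(α,z) = (z² − 12(1−α)z + 12(α−1)(3α−2))/288. -/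
open Complex Filter Set

noncomputable def gAux : ℂ → ℂ := dslope Complex.exp 0

noncomputable def hAux : ℂ → ℂ :=
  dslope (dslope (fun τ => Complex.exp τ - 1 - τ) 0) 0

lemma iteratedDeriv_eq_coeff {f : ℂ → ℂ} {p : FormalMultilinearSeries ℂ ℂ ℂ}
    (hp : HasFPowerSeriesAt f p 0) (n : ℕ) :
    iteratedDeriv n f 0 = (n.factorial : ℂ) * p.coeff n := by
  obtain ⟨r, hr⟩ := hp
  have h := hr.factorial_smul (1 : ℂ) n
  rw [iteratedDeriv_eq_iteratedFDeriv, ← h, FormalMultilinearSeries.coeff, nsmul_eq_mul]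
  norm_num

lemma iteratedDeriv_exp (n : ℕ) : iteratedDeriv n Complex.exp = Complex.exp := by
  induction n with
  | zero => exact iteratedDeriv_zero
  | succ n ih => rw [iteratedDeriv_succ, ih, Complex.deriv_exp]

lemma deriv_f2 : deriv (fun τ => Complex.exp τ - 1 - τ) = fun τ => Complex.exp τ - 1 := by
  funext τ
  exact (((Complex.hasDerivAt_exp τ).sub_const 1).sub (hasDerivAt_id τ)).deriv.trans (by ring)

lemma iteratedDeriv_f2 (n : ℕ) :
    iteratedDeriv (n + 2) (fun τ => Complex.exp τ - 1 - τ) = Complex.exp := by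
  have h2 : iteratedDeriv 2 (fun τ => Complex.exp τ - 1 - τ) = Complex.exp := by
    rw [show (2 : ℕ) = 1 + 1 from rfl, iteratedDeriv_succ, iteratedDeriv_one, deriv_f2]
    funext τ
    exact ((Complex.hasDerivAt_exp τ).sub_const 1).deriv
  induction n with
  | zero => exact h2
  | succ n ih => rw [iteratedDeriv_succ, ih, Complex.deriv_exp]

lemma coeff_p_exp {p : FormalMultilinearSeries ℂ ℂ ℂ}
    (hp : HasFPowerSeriesAt Complex.exp p 0) (n : ℕ) :
    p.coeff n = (n.factorial : ℂ)⁻¹ := by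
  have h := iteratedDeriv_eq_coeff hp n
  rw [iteratedDeriv_exp, Complex.exp_zero] at h
  have h2 : (n.factorial : ℂ) ≠ 0 := by exact_mod_cast (Nat.factorial_ne_zero _)
  field_simp [h2]
  linear_combination -h

lemma gAux_facts :
    AnalyticAt ℂ gAux 0 ∧ gAux 0 = 1 ∧ deriv gAux 0 = 1/2 ∧ iteratedDeriv 2 gAux 0 = 1/3 := by
  obtain ⟨p, hp⟩ : AnalyticAt ℂ Complex.exp 0 := analyticAt_cexp
  have hg : HasFPowerSeriesAt gAux p.fslope 0 := hp.has_fpower_series_dslope_fslope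
  have hc : ∀ n, iteratedDeriv n gAux 0 = (n.factorial : ℂ) * ((n+1).factorial : ℂ)⁻¹ := by
    intro n
    rw [iteratedDeriv_eq_coeff hg n, FormalMultilinearSeries.coeff_fslope, coeff_p_exp hp]
  refine ⟨hg.analyticAt, ?_, ?_, ?_⟩
  · have := hc 0; rw [iteratedDeriv_zero] at this; rw [this]; norm_num [Nat.factorial]
  · have := hc 1; rw [iteratedDeriv_one] at this; rw [this]; norm_num [Nat.factorial]
  · have := hc 2; rw [this]; norm_num [Nat.factorial]

lemma hAux_facts :
    AnalyticAt ℂ hAux 0 ∧ hAux 0 = 1/2 ∧ deriv hAux 0 = 1/6 ∧ iteratedDeriv 2 hAux 0 = 1/12 := by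
  obtain ⟨q, hq⟩ : AnalyticAt ℂ (fun τ => Complex.exp τ - 1 - τ) 0 :=
    ((analyticAt_cexp.sub analyticAt_const).sub (analyticAt_id))
  have h1 : HasFPowerSeriesAt (dslope (fun τ => Complex.exp τ - 1 - τ) 0) q.fslope 0 :=
    hq.has_fpower_series_dslope_fslope
  have hh : HasFPowerSeriesAt hAux q.fslope.fslope 0 := h1.has_fpower_series_dslope_fslope
  have hcq : ∀ n, q.coeff (n + 2) = (((n+2).factorial : ℂ))⁻¹ := by
    intro n
    have h := iteratedDeriv_eq_coeff hq (n + 2)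
    rw [iteratedDeriv_f2, Complex.exp_zero] at h
    have h2 : ((n+2).factorial : ℂ) ≠ 0 := by exact_mod_cast (Nat.factorial_ne_zero _)
    field_simp [h2]
    linear_combination -h
  have hc : ∀ n, iteratedDeriv n hAux 0 = (n.factorial : ℂ) * (((n+2).factorial : ℂ))⁻¹ := by
    intro n
    rw [iteratedDeriv_eq_coeff hh n, FormalMultilinearSeries.coeff_fslope,
      FormalMultilinearSeries.coeff_fslope, hcq]
  refine ⟨hh.analyticAt, ?_, ?_, ?_⟩
  · have := hc 0; rw [iteratedDeriv_zero] at this; rw [this]; norm_num [Nat.factorial]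
  · have := hc 1; rw [iteratedDeriv_one] at this; rw [this]; norm_num [Nat.factorial]
  · have := hc 2; rw [this]; norm_num [Nat.factorial]

lemma gAux_apply {τ : ℂ} (h : τ ≠ 0) : gAux τ = (Complex.exp τ - 1) / τ := by
  rw [gAux, dslope_of_ne _ h, slope_def_field]
  simp

lemma hAux_apply {τ : ℂ} (h : τ ≠ 0) : hAux τ = (Complex.exp τ - 1 - τ) / τ ^ 2 := by
  have h0 : dslope (fun τ => Complex.exp τ - 1 - τ) 0 0 = 0 := by
    rw [dslope_same, deriv_f2]; simp
  rw [hAux, dslope_of_ne _ h, slope_def_field, h0, dslope_of_ne _ h, slope_def_field]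
  rw [sub_zero, sub_zero, sub_zero, div_div, Complex.exp_zero]
  ring

noncomputable def Pfun (α z : ℂ) : ℂ → ℂ := fun τ =>
  z * (hAux τ / gAux τ - 1/2) + (1 - α) * (τ - Complex.log (gAux τ))

noncomputable def D1fun (α z : ℂ) : ℂ → ℂ := fun τ =>
  z * ((deriv hAux τ * gAux τ - hAux τ * deriv gAux τ) / gAux τ ^ 2) +
    (1 - α) * (1 - deriv gAux τ / gAux τ)

lemma hasDerivAt_P (α z τ : ℂ) (hg : AnalyticAt ℂ gAux τ) (hh : AnalyticAt ℂ hAux τ)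
    (hm : gAux τ ∈ Complex.slitPlane) : HasDerivAt (Pfun α z) (D1fun α z τ) τ := by
  have hgd : HasDerivAt gAux (deriv gAux τ) τ := hg.differentiableAt.hasDerivAt
  have hhd : HasDerivAt hAux (deriv hAux τ) τ := hh.differentiableAt.hasDerivAt
  have hdiv := hhd.div hgd (Complex.slitPlane_ne_zero hm)
  have hlog := hgd.clog hm
  exact ((hdiv.sub_const (1/2)).const_mul z).add
    (((hasDerivAt_id τ).sub hlog).const_mul (1 - α))

lemma exp_ne_one_of_small {τ : ℂ} (h0 : τ ≠ 0) (h1 : ‖τ‖ < 1) : Complex.exp τ ≠ 1 := by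
  intro hc
  rw [Complex.exp_eq_one_iff] at hc
  obtain ⟨n, hn⟩ := hc
  have hn0 : n ≠ 0 := by rintro rfl; simp at hn; exact h0 hn
  have hnorm : ‖τ‖ = |(n : ℝ)| * (2 * Real.pi) := by
    rw [hn]
    simp [norm_mul, Complex.norm_I, abs_of_pos Real.pi_pos]
  have h2 : (1 : ℝ) ≤ |(n : ℝ)| := by
    rw [← Int.cast_abs]
    exact_mod_cast Int.one_le_abs (by omega)
  have hπ := Real.pi_gt_three
  rw [hnorm] at h1
  nlinarith

lemma eventually_nice : ∀ᶠ τ in nhds (0 : ℂ),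
    AnalyticAt ℂ gAux τ ∧ AnalyticAt ℂ hAux τ ∧ gAux τ ∈ Complex.slitPlane ∧
      (-Real.pi < (τ - Complex.log (gAux τ)).im ∧ (τ - Complex.log (gAux τ)).im < Real.pi) ∧
      ‖τ‖ < 1 := by
  obtain ⟨hga, hg0, _, _⟩ := gAux_facts
  obtain ⟨hha, _, _, _⟩ := hAux_facts
  have hmem : ∀ᶠ τ in nhds (0 : ℂ), gAux τ ∈ Complex.slitPlane := by
    refine hga.continuousAt.eventually_mem (Complex.isOpen_slitPlane.mem_nhds ?_)
    rw [hg0]; exact Complex.one_mem_slitPlane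
  have hcont : ContinuousAt (fun τ => (τ - Complex.log (gAux τ)).im) 0 := by
    refine Complex.continuous_im.continuousAt.comp ?_
    exact continuousAt_id.sub ((continuousAt_clog (by
      rw [hg0]; exact Complex.one_mem_slitPlane)).comp hga.continuousAt)
  have him : ∀ᶠ τ in nhds (0 : ℂ),
      (τ - Complex.log (gAux τ)).im ∈ Set.Ioo (-Real.pi) Real.pi := by
    refine hcont.eventually_mem (isOpen_Ioo.mem_nhds ?_)
    simp [hg0, Complex.log_one]
    exact Real.pi_pos
  have hsmall : ∀ᶠ τ : ℂ in nhds 0, ‖τ‖ < 1 := by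
    filter_upwards [Metric.ball_mem_nhds (0 : ℂ) one_pos] with τ hτ
    simpa [Metric.mem_ball] using hτ
  filter_upwards [hga.eventually_analyticAt, hha.eventually_analyticAt, hmem, him, hsmall] with
    τ h1 h2 h3 h4 h5
  exact ⟨h1, h2, h3, ⟨h4.1, h4.2⟩, h5⟩

/-- The Taylor coefficients `d_m(α,z)` of `f(τ) = e^{zμ(τ)}(τ/(1−e^{−τ}))^{1−α}`
(with `μ(τ) = 1/τ − 1/(e^τ−1) − 1/2`) around `τ = 0` satisfy `d_0 = 1`,
`d_1 = (6(1−α)−z)/12`, `d_2 = (z² − 12(1−α)z + 12(α−1)(3α−2))/288`. -/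
theorem taylor_coefficients_of_f (α z : ℂ) :
    ∃ F : ℂ → ℂ,
      AnalyticAt ℂ F 0 ∧
      (∀ᶠ τ in nhdsWithin (0 : ℂ) {(0 : ℂ)}ᶜ,
        F τ = Complex.exp (z * (1 / τ - 1 / (Complex.exp τ - 1) - 1 / 2)) *
          (τ / (1 - Complex.exp (-τ))) ^ ((1 : ℂ) - α)) ∧
      F 0 = 1 ∧
      deriv F 0 = (6 * (1 - α) - z) / 12 ∧
      iteratedDeriv 2 F 0 / 2 =
        (z ^ 2 - 12 * (1 - α) * z + 12 * (α - 1) * (3 * α - 2)) / 288 := by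
  obtain ⟨hga, hg0, hg1, hg2⟩ := gAux_facts
  obtain ⟨hha, hh0, hh1, hh2⟩ := hAux_facts
  have hg0ne : gAux 0 ≠ 0 := by rw [hg0]; exact one_ne_zero
  have hmem0 : gAux 0 ∈ Complex.slitPlane := by rw [hg0]; exact Complex.one_mem_slitPlane
  have hP0 : Pfun α z 0 = 0 := by
    simp [Pfun, hg0, hh0, Complex.log_one]
  refine ⟨fun τ => Complex.exp (Pfun α z τ), ?_, ?_, ?_, ?_, ?_⟩
  · -- analyticity
    refine AnalyticAt.cexp ?_
    refine (analyticAt_const.mul ((hha.div hga hg0ne).sub analyticAt_const)).add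
      (analyticAt_const.mul ((analyticAt_id).sub ?_))
    exact (analyticAt_clog hmem0).comp hga
  · -- eventual equality
    filter_upwards [eventually_nice.filter_mono nhdsWithin_le_nhds, self_mem_nhdsWithin] with
      τ hnice (hτ0 : τ ≠ 0)
    obtain ⟨h1, h2, h3, ⟨him1, him2⟩, hsmall⟩ := hnice
    have hgne : gAux τ ≠ 0 := Complex.slitPlane_ne_zero h3
    have hexp1 : Complex.exp τ ≠ 1 := exp_ne_one_of_small hτ0 hsmall
    have he1 : Complex.exp τ - 1 ≠ 0 := sub_ne_zero.mpr hexp1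
    have hden : 1 - Complex.exp (-τ) = (Complex.exp τ - 1) / Complex.exp τ := by
      rw [Complex.exp_neg]
      field_simp [Complex.exp_ne_zero]
    have hdenne : 1 - Complex.exp (-τ) ≠ 0 := by
      rw [hden]; exact div_ne_zero he1 (Complex.exp_ne_zero τ)
    have key1 : hAux τ / gAux τ - 1/2 = 1/τ - 1/(Complex.exp τ - 1) - 1/2 := by
      rw [hAux_apply hτ0, gAux_apply hτ0]
      field_simp
    have key2 : τ / (1 - Complex.exp (-τ)) = Complex.exp (τ - Complex.log (gAux τ)) := by
      rw [Complex.exp_sub, Complex.exp_log hgne, gAux_apply hτ0, hden]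
      field_simp
    have key3 : (τ / (1 - Complex.exp (-τ))) ^ ((1 : ℂ) - α) =
        Complex.exp ((1 - α) * (τ - Complex.log (gAux τ))) := by
      rw [Complex.cpow_def_of_ne_zero (div_ne_zero hτ0 hdenne), key2,
        Complex.log_exp him1 him2.le, mul_comm]
    rw [Pfun, Complex.exp_add, key1, key3]
  · -- value at 0
    show Complex.exp (Pfun α z 0) = 1
    rw [hP0, Complex.exp_zero]
  · -- first derivative
    have hF := (hasDerivAt_P α z 0 hga hha hmem0).cexp
    rw [hF.deriv, hP0, Complex.exp_zero, one_mul, D1fun]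
    rw [hg0, hg1, hh0, hh1]
    ring
  · -- second derivative
    have hFd : deriv (fun τ => Complex.exp (Pfun α z τ)) =ᶠ[nhds (0 : ℂ)]
        fun τ => Complex.exp (Pfun α z τ) * D1fun α z τ := by
      filter_upwards [eventually_nice] with τ ⟨h1, h2, h3, _, _⟩
      exact ((hasDerivAt_P α z τ h1 h2 h3).cexp).deriv
    have hstep : iteratedDeriv 2 (fun τ => Complex.exp (Pfun α z τ)) 0 =
        deriv (fun τ => Complex.exp (Pfun α z τ) * D1fun α z τ) 0 := by
      rw [show (2 : ℕ) = 1 + 1 from rfl, iteratedDeriv_succ, iteratedDeriv_one]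
      exact hFd.deriv_eq
    -- HasDerivAt for deriv gAux and deriv hAux at 0
    obtain ⟨s, hs, hgs⟩ := hga.exists_mem_nhds_analyticOnNhd
    obtain ⟨t, ht, hht⟩ := hha.exists_mem_nhds_analyticOnNhd
    have hdg : HasDerivAt (deriv gAux) (iteratedDeriv 2 gAux 0) 0 := by
      have := (hgs.deriv 0 (mem_of_mem_nhds hs)).differentiableAt.hasDerivAt
      rwa [show iteratedDeriv 2 gAux 0 = deriv (deriv gAux) 0 by
        rw [show (2 : ℕ) = 1 + 1 from rfl, iteratedDeriv_succ, iteratedDeriv_one]]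
    have hdh : HasDerivAt (deriv hAux) (iteratedDeriv 2 hAux 0) 0 := by
      have := (hht.deriv 0 (mem_of_mem_nhds ht)).differentiableAt.hasDerivAt
      rwa [show iteratedDeriv 2 hAux 0 = deriv (deriv hAux) 0 by
        rw [show (2 : ℕ) = 1 + 1 from rfl, iteratedDeriv_succ, iteratedDeriv_one]]
    have hgd : HasDerivAt gAux (deriv gAux 0) 0 := hga.differentiableAt.hasDerivAt
    have hhd : HasDerivAt hAux (deriv hAux 0) 0 := hha.differentiableAt.hasDerivAt
    have Hnum : HasDerivAt (fun τ => deriv hAux τ * gAux τ - hAux τ * deriv gAux τ)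
        ((iteratedDeriv 2 hAux 0 * gAux 0 + deriv hAux 0 * deriv gAux 0) -
          (deriv hAux 0 * deriv gAux 0 + hAux 0 * iteratedDeriv 2 gAux 0)) 0 :=
      (hdh.mul hgd).sub (hhd.mul hdg)
    have Hden : HasDerivAt (fun τ => gAux τ ^ 2) (2 * gAux 0 ^ 1 * deriv gAux 0) 0 := hgd.pow 2
    have Hquot := Hnum.div Hden (pow_ne_zero 2 hg0ne)
    have HB := ((hasDerivAt_const (0 : ℂ) (1 : ℂ)).sub (hdg.div hgd hg0ne))
    have HD1 : HasDerivAt (D1fun α z) _ 0 := (Hquot.const_mul z).add (HB.const_mul (1 - α))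
    have Hprod : HasDerivAt (fun τ => Complex.exp (Pfun α z τ) * D1fun α z τ) _ 0 :=
      ((hasDerivAt_P α z 0 hga hha hmem0).cexp).mul HD1
    rw [hstep, Hprod.deriv, hP0, Complex.exp_zero, one_mul, D1fun]
    rw [hg0, hg1, hg2, hh0, hh1, hh2]
    norm_num
    ring
end

section
/- Suppose for each n, L̂_{n-1}(z)/L̂_n(z) = −(1/n)(1 − √(−z/n) + (1−2z−2α)/(4n) + O(n^{−3/2})) and Λ_n = n + σ√(−cn) + (2α−2c−1)/4 + O(n^{−1/2}) as n → ∞, with σ ∈ {+1,−1}, z ∉ [0,∞), c < 0. Then Q_n(z)/L̂_n(z) := 1 + Λ_n·L̂_{n-1}(z)/L̂_n(z) = (√(−z) − σ√(−c))/√n − (√(−z) − σ√(−c))²/(2n) + O(n^{−3/2}) as n → ∞. -/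
/-!
Write `s = √n`, `w = √(-z)`, `γ = σ√(-c)`. The hypotheses say
`Λ_n = s² + γ s + β + O(s⁻¹)` and `L̂_{n-1}/L̂_n = -s⁻²(1 - w s⁻¹ + δ s⁻²) + O(s⁻⁵)`.
In `1 +` the product of the two model terms the constant cancels, the `s⁻¹` coefficient is
`w - γ`, and the `s⁻²` coefficient `γ w - β - δ` equals `-(w - γ)²/2` exactly when
`2β = w² + γ² - 2δ`, which holds because `w² = -z` and `γ² = -c`. The error terms contribute
`O(n) · O(n^{-5/2})` and `O(n^{-1/2}) · O(n^{-1})`.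
-/

open Asymptotics Filter

namespace Complex

lemma div_ofReal_cpow_of_nonneg (x : ℂ) {b : ℝ} (hb : 0 ≤ b) (r : ℂ) :
    (x / b) ^ r = x ^ r / (b : ℂ) ^ r := by
  rcases eq_or_ne r 0 with rfl | hr
  · simp
  rcases hb.eq_or_lt with rfl | hb
  · simp [zero_cpow hr]
  rcases eq_or_ne x 0 with rfl | hx
  · simp [zero_cpow hr]
  have hb' : ((b⁻¹ : ℝ) : ℂ) ≠ 0 := ofReal_ne_zero.mpr (inv_ne_zero hb.ne')
  rw [div_eq_mul_inv, ← ofReal_inv, cpow_def_of_ne_zero (mul_ne_zero hx hb'),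
    log_mul_ofReal _ (inv_pos.mpr hb) _ hx, ofReal_log (inv_pos.mpr hb).le, add_mul, exp_add,
    ← cpow_def_of_ne_zero hx, ← cpow_def_of_ne_zero hb', ofReal_inv,
    inv_cpow_ofReal_nonneg hb.le, div_eq_mul_inv, mul_comm]

lemma ofReal_sqrt_eq_cpow_half {r : ℝ} (hr : 0 ≤ r) :
    ((√r : ℝ) : ℂ) = (r : ℂ) ^ (1 / 2 : ℂ) := by
  rw [Real.sqrt_eq_rpow, ofReal_cpow hr]
  push_cast
  rfl

end Complex

lemma isBigO_natCast_rpow_of_le {a b : ℝ} (h : a ≤ b) :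
    (fun n : ℕ => (n : ℝ) ^ a) =O[atTop] fun n => (n : ℝ) ^ b := by
  refine Eventually.isBigO ?_
  filter_upwards [eventually_ge_atTop 1] with n hn
  rw [Real.norm_of_nonneg (by positivity)]
  exact Real.rpow_le_rpow_of_exponent_le (Nat.one_le_cast.mpr hn) h

lemma norm_sqrt_natCast_zpow (n : ℕ) (k : ℤ) :
    ‖((√n : ℝ) : ℂ) ^ k‖ = (n : ℝ) ^ ((k : ℝ) / 2) := by
  rw [norm_zpow, Complex.norm_real, Real.norm_of_nonneg (Real.sqrt_nonneg _),
    Real.sqrt_eq_rpow, ← Real.rpow_intCast, ← Real.rpow_mul n.cast_nonneg]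
  ring_nf

lemma isBigO_const_mul_sqrt_natCast_zpow (a : ℂ) {k : ℤ} {r : ℝ} (h : (k : ℝ) / 2 ≤ r) :
    (fun n : ℕ => a * ((√n : ℝ) : ℂ) ^ k) =O[atTop] fun n => (n : ℝ) ^ r := by
  refine ((isBigO_const_mul_self a _ _).trans ?_).trans (isBigO_natCast_rpow_of_le h)
  exact isBigO_norm_left.mp <|
    (isBigO_refl _ _).congr_left fun n => (norm_sqrt_natCast_zpow n k).symm

lemma expansion_product_identity {K : Type*} [Field K] [NeZero (2 : K)] {s w γ δ β : K}
    (hs : s ≠ 0) (hβ : 2 * β = w ^ 2 + γ ^ 2 - 2 * δ) :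
    1 + (s ^ 2 + γ * s + β) * (-(1 - w / s + δ / s ^ 2) / s ^ 2)
      - ((w - γ) / s - (w - γ) ^ 2 / (2 * s ^ 2))
    = (β * w - γ * δ) / s ^ 3 - β * δ / s ^ 4 := by
  field_simp
  linear_combination (-s ^ 2) * hβ

theorem isBigO_one_add_mul_sub_of_sqrt_expansions {w γ δ β : ℂ}
    (hβ : 2 * β = w ^ 2 + γ ^ 2 - 2 * δ) {L Λ : ℕ → ℂ}
    (hL : (fun n : ℕ => L n + (1 - w / √n + δ / n) / n)
      =O[atTop] fun n => (n : ℝ) ^ (-(5 : ℝ) / 2))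
    (hΛ : (fun n : ℕ => Λ n - (n + γ * √n + β))
      =O[atTop] fun n => (n : ℝ) ^ (-(1 : ℝ) / 2)) :
    (fun n : ℕ => 1 + Λ n * L n - ((w - γ) / √n - (w - γ) ^ 2 / (2 * n)))
      =O[atTop] fun n => (n : ℝ) ^ (-(3 : ℝ) / 2) := by
  set M : ℕ → ℂ := fun n => n + γ * √n + β
  set R : ℕ → ℂ := fun n => -(1 - w / √n + δ / n) / n
  have hsq (n : ℕ) : (√n : ℂ) ^ 2 = n := by
    rw [← Complex.ofReal_pow, Real.sq_sqrt n.cast_nonneg, Complex.ofReal_natCast]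
  have hs_ne : ∀ᶠ n : ℕ in atTop, (√n : ℂ) ≠ 0 := by
    filter_upwards [eventually_ge_atTop 1] with n hn
    simpa using Nat.one_le_iff_ne_zero.mp hn
  have hM : M =O[atTop] fun n => (n : ℝ) ^ (1 : ℝ) := by
    refine (((isBigO_const_mul_sqrt_natCast_zpow 1 (k := 2) (by norm_num)).add
      (isBigO_const_mul_sqrt_natCast_zpow γ (k := 1) (by norm_num))).add
      (isBigO_const_mul_sqrt_natCast_zpow β (k := 0) (by norm_num))).congr_left fun n => ?_
    simp [M, hsq]
  have hR : R =O[atTop] fun n => (n : ℝ) ^ (-1 : ℝ) := by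
    refine (((isBigO_const_mul_sqrt_natCast_zpow (-1) (k := -2) (by norm_num)).add
      (isBigO_const_mul_sqrt_natCast_zpow w (k := -3) (by norm_num))).sub
      (isBigO_const_mul_sqrt_natCast_zpow δ (k := -4) (by norm_num))).congr' ?_ .rfl
    filter_upwards [hs_ne] with n hn
    simp only [R, ← hsq, zpow_neg, zpow_ofNat]
    field_simp
    ring
  have hLR : (fun n => L n - R n) =O[atTop] fun n => (n : ℝ) ^ (-(5 : ℝ) / 2) :=
    hL.congr_left fun n => by simp only [R]; ring
  have hL' : L =O[atTop] fun n => (n : ℝ) ^ (-1 : ℝ) :=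
    (hR.add (hLR.trans (isBigO_natCast_rpow_of_le (by norm_num)))).congr_left fun n => by ring
  have hmain : (fun n : ℕ => 1 + M n * R n - ((w - γ) / √n - (w - γ) ^ 2 / (2 * n)))
      =O[atTop] fun n => (n : ℝ) ^ (-(3 : ℝ) / 2) := by
    refine ((isBigO_const_mul_sqrt_natCast_zpow (β * w - γ * δ) (k := -3) (by norm_num)).sub
      (isBigO_const_mul_sqrt_natCast_zpow (β * δ) (k := -4) (by norm_num))).congr' ?_ .rfl
    filter_upwards [hs_ne] with n hn
    simp only [M, R, ← hsq]
    rw [expansion_product_identity hn hβ]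
    simp only [zpow_neg, zpow_ofNat, div_eq_mul_inv]
  refine ((hmain.add (hM.mul_atTop_rpow_natCast_of_isBigO_rpow _ _ _ hLR (by norm_num))).add
    (hΛ.mul_atTop_rpow_natCast_of_isBigO_rpow _ _ _ hL' (by norm_num))).congr_left fun n => ?_
  simp only [Pi.mul_apply, M]
  ring

theorem geronimus_relative_asymptotics_general
    (α c σ : ℝ) (hc : c < 0) (hσ : σ = 1 ∨ σ = -1)
    (z : ℂ)
    (Lratio Λ : ℕ → ℂ)
    (hL : (fun n : ℕ =>
        Lratio n + (1 / (n : ℂ)) *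
          (1 - (-z / (n : ℂ)) ^ ((1 : ℂ) / 2) +
            (1 - 2 * z - 2 * (α : ℂ)) / (4 * (n : ℂ))))
      =O[atTop] fun n : ℕ => (n : ℝ) ^ (-(5 : ℝ) / 2))
    (hΛ : (fun n : ℕ =>
        Λ n - ((n : ℂ) + (σ : ℂ) * (Real.sqrt (-c * n) : ℂ) +
          (2 * (α : ℂ) - 2 * (c : ℂ) - 1) / 4))
      =O[atTop] fun n : ℕ => (n : ℝ) ^ (-(1 : ℝ) / 2)) :
    (fun n : ℕ =>
        (1 + Λ n * Lratio n) -
          (((-z) ^ ((1 : ℂ) / 2) - (σ : ℂ) * (Real.sqrt (-c) : ℂ)) / (Real.sqrt n : ℂ) -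
            ((-z) ^ ((1 : ℂ) / 2) - (σ : ℂ) * (Real.sqrt (-c) : ℂ)) ^ 2 / (2 * (n : ℂ))))
      =O[atTop] fun n : ℕ => (n : ℝ) ^ (-(3 : ℝ) / 2) := by
  have hw : ((-z) ^ ((1 : ℂ) / 2)) ^ 2 = -z := by
    rw [one_div]
    exact Complex.cpow_ofNat_inv_pow _ 2
  have hγ : ((σ : ℂ) * (√(-c) : ℝ)) ^ 2 = (-c : ℝ) := by
    rw [mul_pow, ← Complex.ofReal_pow (√(-c)), Real.sq_sqrt (by linarith)]
    rcases hσ with rfl | rfl <;> simp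
  refine isBigO_one_add_mul_sub_of_sqrt_expansions (δ := (1 - 2 * z - 2 * α) / 4)
    (β := (2 * α - 2 * c - 1) / 4) ?_ (hL.congr_left fun n => ?_) (hΛ.congr_left fun n => ?_)
  · rw [hw, hγ]
    push_cast
    ring
  · rw [← Complex.ofReal_natCast, Complex.div_ofReal_cpow_of_nonneg _ n.cast_nonneg,
      ← Complex.ofReal_sqrt_eq_cpow_half n.cast_nonneg]
    ring
  · rw [Real.sqrt_mul (by linarith)]
    push_cast
    ring

/-- Asymptotic-manipulation lemma: from the ratio asymptotics of consecutive
monic Laguerre polynomials,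
`L̂_{n-1}(z)/L̂_n(z) = −(1/n)(1 − √(−z/n) + (1−2z−2α)/(4n) + O(n^{−3/2}))`,
and the connection-coefficient asymptotics
`Λ_n = n + σ√(−cn) + (2α−2c−1)/4 + O(n^{−1/2})`, one gets
`1 + Λ_n L̂_{n-1}(z)/L̂_n(z)
  = (√(−z) − σ√(−c))/√n − (√(−z) − σ√(−c))²/(2n) + O(n^{−3/2})`. -/
theorem geronimus_relative_asymptotics
    (α c σ : ℝ) (hc : c < 0) (hσ : σ = 1 ∨ σ = -1)
    (z : ℂ) (hz : ¬(z.im = 0 ∧ 0 ≤ z.re))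
    (Lratio Λ : ℕ → ℂ)
    (hL : (fun n : ℕ =>
        Lratio n + (1 / (n : ℂ)) *
          (1 - (-z / (n : ℂ)) ^ ((1 : ℂ) / 2) +
            (1 - 2 * z - 2 * (α : ℂ)) / (4 * (n : ℂ))))
      =O[atTop] fun n : ℕ => (n : ℝ) ^ (-(5 : ℝ) / 2))
    (hΛ : (fun n : ℕ =>
        Λ n - ((n : ℂ) + (σ : ℂ) * (Real.sqrt (-c * n) : ℂ) +
          (2 * (α : ℂ) - 2 * (c : ℂ) - 1) / 4))
      =O[atTop] fun n : ℕ => (n : ℝ) ^ (-(1 : ℝ) / 2)) :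
    (fun n : ℕ =>
        (1 + Λ n * Lratio n) -
          (((-z) ^ ((1 : ℂ) / 2) - (σ : ℂ) * (Real.sqrt (-c) : ℂ)) / (Real.sqrt n : ℂ) -
            ((-z) ^ ((1 : ℂ) / 2) - (σ : ℂ) * (Real.sqrt (-c) : ℂ)) ^ 2 / (2 * (n : ℂ))))
      =O[atTop] fun n : ℕ => (n : ℝ) ^ (-(3 : ℝ) / 2) :=
  geronimus_relative_asymptotics_general α c σ hc hσ z Lratio Λ hL hΛ
end
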